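/- (Bargmann's bound, oscillation form) Let V : [0,∞) → ℝ be bounded, continuous, and satisfy V(x) ≤ 0 for all x ≥ 0, with ∫₀^∞ x|V(x)| dx < ∞. Let u be the solution of −u″ + Vu = 0 on [0,∞) with u(0) = 0 and u′(0) = 1. Then the number of zeros of u in (0,∞) is at most ∫₀^∞ x|V(x)| dx. (By the Sturm oscillation theorem, this bounds the number of negative Dirichlet eigenvalues of −d²/dx² + V on the half-line.) -/

import Mathlib

/-!
Let `a < b` be zeros of `u` in `[0, ∞)` and let `c` maximise `|u|` on `[a, b]`. Then `u'(c) = 0`,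
and Taylor's formula around `c` evaluated at `a` gives `u(c) = ∫ₐᶜ (a - s) V(s) u(s) ds`; since
`|a - s| ≤ s` this yields `|u(c)| ≤ |u(c)| ∫ₐᶜ s |V(s)| ds`. Here `u(c) ≠ 0`: otherwise `u`
vanishes on `[a, b]`, and uniqueness for the first-order system satisfied by `(u, u')` forces
`u'(0) = 0`. Hence any two zeros in `[0, ∞)` are separated by `∫ s |V(s)| ds ≥ 1`, and summing
over the gaps between `0` and the zeros in `(0, ∞)` bounds their number.
-/

open Set MeasureTheory intervalIntegral

theorem ContDiff.eq_add_deriv_mul_add_integral {f : ℝ → ℝ} (hf : ContDiff ℝ 2 f) (c x : ℝ) :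
    f x = f c + deriv f c * (x - c) + ∫ s in c..x, (x - s) * deriv (deriv f) s := by
  have hf' : ContDiff ℝ 1 (deriv f) := hf.iterate_deriv' 1 1
  have hparts := integral_mul_deriv_eq_deriv_mul (a := c) (b := x) (u := (x - ·))
    (u' := fun _ => -1) (v := deriv f) (v' := deriv (deriv f))
    (fun s _ => (hasDerivAt_id s).const_sub x |>.congr_deriv (by simp))
    (fun s _ => (hf'.differentiable one_ne_zero s).hasDerivAt) intervalIntegrable_const
    ((hf'.continuous_deriv le_rfl).intervalIntegrable c x)
  have hftc : ∫ s in c..x, deriv f s = f x - f c :=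
    integral_deriv_eq_sub (fun s _ => hf.differentiable (by norm_num) s)
      ((hf.continuous_deriv (by norm_num)).intervalIntegrable c x)
  simp only [neg_one_mul, intervalIntegral.integral_neg, hftc] at hparts
  rw [hparts]
  ring

theorem lipschitzWith_snd_prodMk_mul_fst (a : ℝ) :
    LipschitzWith (max 1 ‖a‖₊) fun p : ℝ × ℝ => (p.2, a * p.1) :=
  LipschitzWith.prod_snd.prodMk (mul_one ‖a‖₊ ▸ (lipschitzWith_smul a).comp LipschitzWith.prod_fst)

theorem eqOn_zero_of_eq_zero_of_deriv_eq_zero {V u : ℝ → ℝ} (hV : Continuous V)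
    (hu : ContDiff ℝ 2 u) (hode : ∀ x ∈ Ici (0 : ℝ), deriv (deriv u) x = V x * u x)
    {d : ℝ} (hud : u d = 0) (hud' : deriv u d = 0) :
    EqOn (fun x => (u x, deriv u x)) 0 (Icc 0 d) := by
  obtain ⟨M, hM⟩ := isCompact_Icc.exists_bound_of_continuousOn (hV.continuousOn (s := Icc 0 d))
  have hu' : ContDiff ℝ 1 (deriv u) := hu.iterate_deriv' 1 1
  refine ODE_solution_unique_of_mem_Icc_left (v := fun t p => (p.2, V t * p.1))
    (s := fun _ => univ) (K := max 1 M.toNNReal) (fun t ht => ?_)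
    (hu.continuous.prodMk hu'.continuous).continuousOn (fun t ht => ?_) (fun _ _ => trivial)
    continuousOn_const (fun t _ => ?_) (fun _ _ => trivial) (by simp [hud, hud'])
  · refine ((lipschitzWith_snd_prodMk_mul_fst (V t)).weaken ?_).lipschitzOnWith
    gcongr
    rw [← NNReal.coe_le_coe, coe_nnnorm]
    exact (hM t (Ioc_subset_Icc_self ht)).trans (le_max_left _ _)
  · refine HasDerivAt.hasDerivWithinAt ?_
    rw [← hode t (Ioc_subset_Icc_self ht).1]
    exact (hu.differentiable (by norm_num) t).hasDerivAt.prodMk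
      (hu'.differentiable one_ne_zero t).hasDerivAt
  · exact (hasDerivWithinAt_const t (Iic t) (0 : ℝ × ℝ)).congr_deriv (by simp [Prod.zero_eq_mk])

theorem abs_le_abs_mul_integral_of_isMaxOn {V u : ℝ → ℝ} (hV : Continuous V)
    (hu : ContDiff ℝ 2 u) (hode : ∀ x ∈ Ici (0 : ℝ), deriv (deriv u) x = V x * u x)
    {a c : ℝ} (ha : 0 ≤ a) (hac : a ≤ c) (hua : u a = 0) (hu'c : deriv u c = 0)
    (hmax : ∀ s ∈ Icc a c, |u s| ≤ |u c|) :
    |u c| ≤ |u c| * ∫ s in a..c, s * |V s| := by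
  have hVu : Continuous fun s => V s * u s := hV.mul hu.continuous
  have hode_int : ∫ s in a..c, (a - s) * deriv (deriv u) s = ∫ s in a..c, (a - s) * (V s * u s) :=
    integral_congr fun s hs => by
      rw [uIcc_of_le hac] at hs
      simp only [hode s (ha.trans hs.1)]
  have hrep : u c = ∫ s in a..c, (a - s) * (V s * u s) := by
    have htaylor := hu.eq_add_deriv_mul_add_integral c a
    rw [hua, hu'c, integral_symm, hode_int] at htaylor
    linarith
  calc |u c| ≤ ∫ s in a..c, |(a - s) * (V s * u s)| := hrep ▸ abs_integral_le_integral_abs hac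
    _ ≤ ∫ s in a..c, |u c| * (s * |V s|) := by
      refine integral_mono_on hac
        (((continuous_const.sub continuous_id).mul hVu).abs.intervalIntegrable _ _)
        ((continuous_const.mul (continuous_id.mul hV.abs)).intervalIntegrable _ _) fun s hs => ?_
      have hs0 : 0 ≤ s := ha.trans hs.1
      rw [abs_mul, abs_mul, abs_of_nonpos (by linarith [hs.1] : a - s ≤ 0)]
      calc -(a - s) * (|V s| * |u s|) ≤ s * (|V s| * |u c|) :=
            mul_le_mul (by linarith) (mul_le_mul_of_nonneg_left (hmax s hs) (abs_nonneg _))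
              (by positivity) hs0
        _ = |u c| * (s * |V s|) := by ring
    _ = |u c| * ∫ s in a..c, s * |V s| := integral_const_mul _ _

theorem one_le_integral_mul_abs_of_zeros {V u : ℝ → ℝ} (hV : Continuous V)
    (hu : ContDiff ℝ 2 u) (hode : ∀ x ∈ Ici (0 : ℝ), deriv (deriv u) x = V x * u x)
    (h0' : deriv u 0 ≠ 0) {a b : ℝ} (ha : 0 ≤ a) (hab : a < b) (hua : u a = 0) (hub : u b = 0) :
    1 ≤ ∫ s in a..b, s * |V s| := by
  obtain ⟨c, hc, hcmax⟩ := isCompact_Icc.exists_isMaxOn (nonempty_Icc.mpr hab.le)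
    (hu.continuous.pow 2).continuousOn
  have hmax : ∀ s ∈ Icc a b, |u s| ≤ |u c| := fun s hs => sq_le_sq.mp (hcmax hs)
  have huc : u c ≠ 0 := by
    intro huc
    have hzero : ∀ s ∈ Icc a b, u s = 0 := fun s hs =>
      abs_nonpos_iff.mp (by simpa [huc] using hmax s hs)
    have hd : (a + b) / 2 ∈ Ioo a b := ⟨by linarith, by linarith⟩
    have hud' : deriv u ((a + b) / 2) = 0 := by
      have hloc : u =ᶠ[nhds ((a + b) / 2)] fun _ => 0 := by
        filter_upwards [Ioo_mem_nhds hd.1 hd.2] with s hs using hzero s (Ioo_subset_Icc_self hs)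
      rw [hloc.deriv_eq, deriv_const]
    exact h0' (congrArg Prod.snd (eqOn_zero_of_eq_zero_of_deriv_eq_zero hV hu hode
      (hzero _ (Ioo_subset_Icc_self hd)) hud' ⟨le_rfl, by linarith⟩))
  have hcab : c ∈ Ioo a b := ⟨lt_of_le_of_ne hc.1 (by rintro rfl; exact huc hua),
    lt_of_le_of_ne hc.2 (by rintro rfl; exact huc hub)⟩
  have hu'c : deriv u c = 0 := by
    have := (hcmax.localize.isLocalMax (Icc_mem_nhds hcab.1 hcab.2)).hasDerivAt_eq_zero
      ((hu.differentiable (by norm_num) c).hasDerivAt.pow 2)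
    simpa [huc] using this
  have hle := abs_le_abs_mul_integral_of_isMaxOn hV hu hode ha hc.1 hua hu'c
    fun s hs => hmax s ⟨hs.1, hs.2.trans hc.2⟩
  calc (1 : ℝ) ≤ ∫ s in a..c, s * |V s| :=
        le_of_mul_le_mul_left (by linarith) (abs_pos.mpr huc)
    _ ≤ ∫ s in a..b, s * |V s| :=
        integral_mono_interval le_rfl hc.1 hc.2
          ((ae_restrict_iff' measurableSet_Ioc).mpr (ae_of_all _ fun s hs =>
            mul_nonneg (ha.trans hs.1.le) (abs_nonneg _)))
          ((continuous_id.mul hV.abs).intervalIntegrable _ _)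

theorem List.length_le_integral_of_isChain {g : ℝ → ℝ} (hg : Continuous g) {S : Set ℝ}
    (hS : ∀ a ∈ S, ∀ b ∈ S, a < b → 1 ≤ ∫ t in a..b, g t) :
    ∀ (l : List ℝ) (x : ℝ), (x :: l).IsChain (· < ·) → (∀ y ∈ x :: l, y ∈ S) →
      (l.length : ℝ) ≤ ∫ t in x..(x :: l).getLast (List.cons_ne_nil x l), g t
  | [], x, _, _ => by simp
  | y :: l, x, hchain, hmem => by
    rw [List.isChain_cons_cons] at hchain
    have hrest := length_le_integral_of_isChain hg hS l y hchain.2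
      fun z hz => hmem z (List.mem_cons_of_mem x hz)
    have hfirst := hS x (hmem x List.mem_cons_self) y (hmem y (by simp)) hchain.1
    rw [List.getLast_cons_cons, ← integral_add_adjacent_intervals (b := y)
      (hg.intervalIntegrable _ _) (hg.intervalIntegrable _ _), List.length_cons, Nat.cast_succ]
    linarith

theorem Set.finite_and_ncard_le_of_forall_finset_card_le {α : Type*} {S : Set α} {r : ℝ}
    (h : ∀ F : Finset α, ↑F ⊆ S → (F.card : ℝ) ≤ r) : S.Finite ∧ (S.ncard : ℝ) ≤ r := by
  have hfin : S.Finite := by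
    by_contra hS
    obtain ⟨F, hFS, hF, hcard⟩ := Set.Infinite.exists_subset_ncard_eq hS (⌈r⌉₊ + 1)
    have := h hF.toFinset (by simpa using hFS)
    rw [← ncard_eq_toFinset_card F hF, hcard] at this
    push_cast at this
    linarith [Nat.le_ceil r]
  refine ⟨hfin, ?_⟩
  simpa [ncard_eq_toFinset_card S hfin] using h hfin.toFinset (by simp)

theorem bargmann_bound (V : ℝ → ℝ) (hVc : Continuous V)
    (hVint : IntegrableOn (fun x => x * |V x|) (Ioi (0 : ℝ)))
    (u : ℝ → ℝ) (hu : ContDiff ℝ 2 u)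
    (hode : ∀ x ∈ Ici (0 : ℝ), deriv (deriv u) x = V x * u x)
    (h0 : u 0 = 0) (h0' : deriv u 0 = 1) :
    {x ∈ Ioi (0 : ℝ) | u x = 0}.Finite ∧
    ({x ∈ Ioi (0 : ℝ) | u x = 0}.ncard : ℝ) ≤ ∫ x in Ioi (0 : ℝ), x * |V x| := by
  refine Set.finite_and_ncard_le_of_forall_finset_card_le fun F hF => ?_
  set l := F.sort (· ≤ ·)
  have hpos : ∀ y ∈ l, 0 < y := fun y hy => (hF ((F.mem_sort _).mp hy)).1
  have hchain : (0 :: l).IsChain (· < ·) :=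
    List.isChain_iff_pairwise.mpr (List.pairwise_cons.mpr ⟨hpos, F.sortedLT_sort.pairwise⟩)
  have hzeros : ∀ y ∈ 0 :: l, y ∈ {x ∈ Ici (0 : ℝ) | u x = 0} := by
    rintro y (_ | ⟨_, hy⟩)
    · exact ⟨mem_Ici.mpr le_rfl, h0⟩
    · exact ⟨(hpos y hy).le, (hF ((F.mem_sort _).mp hy)).2⟩
  have hlast : 0 ≤ (0 :: l).getLast (List.cons_ne_nil 0 l) := (hzeros _ (List.getLast_mem _)).1
  calc (F.card : ℝ) = l.length := by simp [l]
    _ ≤ ∫ t in (0 : ℝ)..(0 :: l).getLast (List.cons_ne_nil 0 l), t * |V t| :=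
      List.length_le_integral_of_isChain (continuous_id.mul hVc.abs)
        (fun a ha b hb hab => one_le_integral_mul_abs_of_zeros hVc hu hode (by simp [h0'])
          ha.1 hab ha.2 hb.2)
        l 0 hchain hzeros
    _ ≤ ∫ t in Ioi 0, t * |V t| := by
      rw [integral_of_le hlast]
      exact setIntegral_mono_set hVint ((ae_restrict_iff' measurableSet_Ioi).mpr
        (ae_of_all _ fun t ht => mul_nonneg (le_of_lt ht) (abs_nonneg _)))
        Ioc_subset_Ioi_self.eventuallyLE
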